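/- For α > 0, n ≥ 0 and 0 ≤ k < 2^{n+1} with binary expansion k = Σ_{i=0}^n 2^i ε_i: f_α((k+1)/2^{n+1}) - f_α(k/2^{n+1}) = Σ_{i=0}^n (-1)^{ε_i} / 2^{(n-i)α + i}. -/

import Mathlib

/-- The tent map `φ(x) = 2 inf{|x-n| : n ∈ ℤ}`. -/
noncomputable def tent (x : ℝ) : ℝ := 2 * ⨅ n : ℤ, |x - (n:ℝ)|

/-- `f_α(x) = ∑_{j=0}^∞ 2^{-αj} φ(2^j x)`. -/
noncomputable def takagi (α x : ℝ) : ℝ :=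
  ∑' j : ℕ, (1 / (2:ℝ) ^ (α * (j:ℝ))) * tent ((2:ℝ) ^ (j:ℕ) * x)

/-!
At a dyadic point `x = k / 2^N` every term `φ(2^j x)` with `j ≥ N` vanishes, so `f_α` is a finite
sum there. On the grid `2^{-(m+1)} ℤ` the tent map `φ(2^{n-m} ·)` is affine with
slope `±2^{n-m+1}` on each cell, the sign being `+` exactly when the cell
`[k/2^{m+1}, (k+1)/2^{m+1}]` lies in the left half of its unit interval, i.e. when bit `m` of `k`
is `0`. Summing the scaled increments over `j = n - m` gives the formula.
-/

open Finset

lemma tent_eq_two_mul_min_fract (x : ℝ) : tent x = 2 * min (Int.fract x) (1 - Int.fract x) := by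
  have hbdd : BddBelow (Set.range fun n : ℤ => |x - n|) := ⟨0, by rintro _ ⟨n, rfl⟩; positivity⟩
  rw [tent, ← abs_sub_round_eq_min,
    le_antisymm (ciInf_le hbdd (round x)) (le_ciInf (round_le x))]

lemma tent_add_natCast (x : ℝ) (n : ℕ) : tent (x + n) = tent x := by
  simp only [tent_eq_two_mul_min_fract, Int.fract_add_natCast]

lemma tent_natCast (n : ℕ) : tent n = 0 := by
  simp [tent_eq_two_mul_min_fract]

lemma tent_of_le_half {t : ℝ} (h0 : 0 ≤ t) (h1 : t ≤ 1 / 2) : tent t = 2 * t := by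
  rw [tent_eq_two_mul_min_fract, Int.fract_eq_self.2 ⟨h0, by linarith⟩,
    min_eq_left (by linarith)]

lemma tent_of_half_le {t : ℝ} (h0 : 1 / 2 ≤ t) (h1 : t ≤ 1) : tent t = 2 * (1 - t) := by
  rcases h1.lt_or_eq with h1 | rfl
  · rw [tent_eq_two_mul_min_fract, Int.fract_eq_self.2 ⟨by linarith, h1⟩,
      min_eq_right (by linarith)]
  · simpa using tent_natCast 1

lemma tent_succ_div_two_pow_sub (k m : ℕ) :
    tent ((k + 1) / 2 ^ (m + 1)) - tent (k / 2 ^ (m + 1))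
      = (if k.testBit m then -1 else 1) / 2 ^ m := by
  set r := k % 2 ^ m
  set b := k / 2 ^ m % 2
  have hr : (r : ℝ) + 1 ≤ 2 ^ m := by exact_mod_cast Nat.mod_lt k (by positivity : 0 < 2 ^ m)
  have hk : (k : ℝ) = 2 ^ (m + 1) * (k / 2 ^ (m + 1) : ℕ) + 2 ^ m * b + r := by
    exact_mod_cast by rw [add_assoc, add_comm (2 ^ m * b), ← Nat.mod_pow_succ, Nat.div_add_mod]
  have hshift (t : ℝ) :
      (k + t) / 2 ^ (m + 1) = (2 ^ m * b + r + t) / 2 ^ (m + 1) + (k / 2 ^ (m + 1) : ℕ) := by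
    rw [hk]; field_simp; ring
  rw [hshift 1, show (k : ℝ) / 2 ^ (m + 1) = _ by simpa using hshift 0, tent_add_natCast,
    tent_add_natCast, Nat.testBit_eq_decide_div_mod_eq]
  rcases Nat.mod_two_eq_zero_or_one (k / 2 ^ m) with hb | hb <;> simp only [b, hb] <;> norm_num
  · rw [tent_of_le_half (by positivity), tent_of_le_half (by positivity)]
    · field_simp; ring
    all_goals rw [pow_succ]; field_simp; linarith
  · rw [tent_of_half_le, tent_of_half_le]
    · field_simp; ring
    all_goals rw [pow_succ]; field_simp; linarith

lemma takagi_natCast_div_two_pow (α : ℝ) (k N : ℕ) :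
    takagi α (k / 2 ^ N) = ∑ j ∈ range N, 1 / (2:ℝ) ^ (α * j) * tent (k / 2 ^ (N - j)) := by
  rw [takagi, tsum_eq_sum (s := range N)]
  · refine sum_congr rfl fun j hj => ?_
    rw [← Nat.sub_add_cancel (mem_range.1 hj).le, pow_add, Nat.add_sub_cancel]
    field_simp
  · intro j hj
    obtain ⟨d, rfl⟩ := Nat.exists_eq_add_of_le (not_lt.1 (mem_range.not.1 hj))
    rw [show (2:ℝ) ^ (N + d) * (k / 2 ^ N) = (k * 2 ^ d : ℕ) by push_cast; field_simp; ring,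
      tent_natCast, mul_zero]

theorem takagi_diff_formula_general (α : ℝ) (n k : ℕ) :
    takagi α (((k:ℝ) + 1) / 2 ^ (n + 1)) - takagi α ((k:ℝ) / 2 ^ (n + 1))
      = ∑ i ∈ Finset.range (n + 1),
          (if k.testBit i then (-1:ℝ) else 1) / (2:ℝ) ^ (((n - i : ℕ):ℝ) * α + (i:ℝ)) := by
  rw [← Nat.cast_succ, takagi_natCast_div_two_pow, takagi_natCast_div_two_pow,
    ← sum_sub_distrib, ← sum_range_reflect]
  refine sum_congr rfl fun i hi => ?_
  have hi : i ≤ n := Nat.lt_succ_iff.1 (mem_range.1 hi)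
  rw [← mul_sub, Nat.cast_succ, show n + 1 - 1 - i = n - i by omega,
    show n + 1 - (n - i) = i + 1 by omega, tent_succ_div_two_pow_sub,
    Real.rpow_add_natCast two_ne_zero, mul_comm (_ : ℝ) α]
  field_simp

theorem takagi_diff_formula (α : ℝ) (hα : 0 < α) (n k : ℕ) (hk : k < 2 ^ (n + 1)) :
    takagi α (((k:ℝ) + 1) / 2 ^ (n + 1)) - takagi α ((k:ℝ) / 2 ^ (n + 1))
      = ∑ i ∈ Finset.range (n + 1),
          (if k.testBit i then (-1:ℝ) else 1) / (2:ℝ) ^ (((n - i : ℕ):ℝ) * α + (i:ℝ)) :=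
  takagi_diff_formula_general α n k
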